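/- arXiv:1505.01901 — 4 statements merged into one kernel-verified Lean document; each statement's English description precedes it below -/
import Mathlib

section
/- Let I_n = [n!, (n+1)!) and 𝓘(A) = ⋃_{n ∈ A} I_n for A ⊆ ℕ. If C is the set of even numbers, then the density of {n : 𝓘(A)(n) = C(n)} exists and equals 1/2. -/
open Filter Topology
open scoped symmDiff Classical

/-- ρ_n(A): the density of A below n. -/
noncomputable def partialDensity (A : Set ℕ) (n : ℕ) : ℝ :=
  ((Finset.range n).filter (fun k => k ∈ A)).card / n

/-- Lower density ρ̲(A). -/
noncomputable def lowerDensity (A : Set ℕ) : ℝ := liminf (partialDensity A) atTop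

/-- Upper density ρ̄(A). -/
noncomputable def upperDensity (A : Set ℕ) : ℝ := limsup (partialDensity A) atTop

/-- A has density r. -/
def HasDensity (A : Set ℕ) (r : ℝ) : Prop := Tendsto (partialDensity A) atTop (𝓝 r)

/-- A set of naturals is computable. -/
def IsComputableSet (A : Set ℕ) : Prop := ComputablePred (· ∈ A)

/-- A is coarsely computable at density r. -/
def CoarselyComputableAt (A : Set ℕ) (r : ℝ) : Prop :=
  ∃ C : Set ℕ, IsComputableSet C ∧ r ≤ lowerDensity {n | n ∈ A ↔ n ∈ C}

/-- γ(A), the coarse computability bound. -/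
noncomputable def gammaBound (A : Set ℕ) : ℝ := sSup {r | CoarselyComputableAt A r}

/-- A is partially computable at density r. -/
def PartiallyComputableAt (A : Set ℕ) (r : ℝ) : Prop :=
  ∃ φ : ℕ →. Bool, Partrec φ ∧ (∀ n b, b ∈ φ n → (b = true ↔ n ∈ A)) ∧
    r ≤ lowerDensity φ.Dom

/-- α(A), the partial computability bound. -/
noncomputable def alphaBound (A : Set ℕ) : ℝ := sSup {r | PartiallyComputableAt A r}

/-- A is generically computable. -/
def GenericallyComputable (A : Set ℕ) : Prop := PartiallyComputableAt A 1

/-- A is coarsely computable. -/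
def CoarselyComputable (A : Set ℕ) : Prop :=
  ∃ C : Set ℕ, IsComputableSet C ∧ HasDensity (A ∆ C) 0

/-- 𝓘(A) = ⋃_{n ∈ A} [n!, (n+1)!). -/
def calI (A : Set ℕ) : Set ℕ := ⋃ n ∈ A, Set.Ico (Nat.factorial n) (Nat.factorial (n + 1))

/-!
On the block `[j!, (j+1)!)` the set `{n | n ∈ 𝓘(A) ↔ Even n}` is the set of even numbers
(if `j ∈ A`) or of odd numbers (if `j ∉ A`), so on any stretch inside one block it has, up to an
error of `1/2`, exactly half of the points. Below `N ∈ [j!, (j+1)!)` the errors of the `j + 1`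
blocks met so far add up to `O(j)`, which is `o(N)` since `j / j! → 0`.
-/

open Finset

lemma card_filter_range_add_card_filter_Ico (p : ℕ → Prop) [DecidablePred p] {a b : ℕ}
    (hab : a ≤ b) : #{k ∈ range a | p k} + #{k ∈ Ico a b | p k} = #{k ∈ range b | p k} := by
  rw [range_eq_Ico, range_eq_Ico, ← Ico_union_Ico_eq_Ico a.zero_le hab, filter_union,
    card_union_of_disjoint (disjoint_filter_filter (Ico_disjoint_Ico_consecutive 0 a b))]

lemma card_filter_even_range (n : ℕ) : #{k ∈ range n | Even k} = (n + 1) / 2 := by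
  induction n with
  | zero => rfl
  | succ n ih =>
    rw [range_add_one, filter_insert]
    split_ifs with h
    · rw [card_insert_of_notMem (by simp), ih]
      obtain ⟨m, rfl⟩ := h
      omega
    · rw [ih]
      obtain ⟨m, rfl⟩ := Nat.not_even_iff_odd.mp h
      omega

lemma abs_two_mul_card_filter_even_Ico_sub_le {a b : ℕ} (hab : a ≤ b) :
    |2 * (#{k ∈ Ico a b | Even k} : ℤ) - (b - a)| ≤ 1 := by
  have h := card_filter_range_add_card_filter_Ico (Even ·) hab
  rw [card_filter_even_range, card_filter_even_range] at h
  rw [abs_le]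
  omega

lemma abs_two_mul_card_filter_not_even_Ico_sub_le {a b : ℕ} (hab : a ≤ b) :
    |2 * (#{k ∈ Ico a b | ¬Even k} : ℤ) - (b - a)| ≤ 1 := by
  have h := card_filter_add_card_filter_not (s := Ico a b) (p := fun k => Even k)
  rw [Nat.card_Ico] at h
  have := abs_le.mp (abs_two_mul_card_filter_even_Ico_sub_le hab)
  rw [abs_le]
  omega

def ParityOn (S : Set ℕ) (a b : ℕ) : Prop :=
  (∀ k ∈ Ico a b, k ∈ S ↔ Even k) ∨ (∀ k ∈ Ico a b, k ∈ S ↔ ¬Even k)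

lemma ParityOn.mono {S : Set ℕ} {a b a' b' : ℕ} (h : ParityOn S a b) (ha : a ≤ a') (hb : b' ≤ b) :
    ParityOn S a' b' := by
  have hsub : Ico a' b' ⊆ Ico a b := Ico_subset_Ico ha hb
  exact h.imp (fun h k hk => h k (hsub hk)) (fun h k hk => h k (hsub hk))

lemma ParityOn.abs_two_mul_card_sub_le {S : Set ℕ} {a b : ℕ} (h : ParityOn S a b)
    (hab : a ≤ b) : |2 * (#{k ∈ Ico a b | k ∈ S} : ℤ) - (b - a)| ≤ 1 := by
  rcases h with h | h
  · rw [filter_congr h]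
    exact abs_two_mul_card_filter_even_Ico_sub_le hab
  · rw [filter_congr h]
    exact abs_two_mul_card_filter_not_even_Ico_sub_le hab

section Blocks

variable {S : Set ℕ} {t : ℕ → ℕ}

lemma abs_two_mul_card_sub_le_of_parityOn_blocks (ht : Monotone t)
    (hS : ∀ j, ParityOn S (t j) (t (j + 1))) (j : ℕ) :
    |2 * (#{k ∈ range (t j) | k ∈ S} : ℤ) - t j| ≤ t 0 + j := by
  induction j with
  | zero =>
    have := card_filter_le (range (t 0)) (· ∈ S)
    rw [card_range] at this
    rw [abs_le]
    omega
  | succ j ih =>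
    rw [← card_filter_range_add_card_filter_Ico _ (ht j.le_succ)]
    have hblock := abs_le.mp ((hS j).abs_two_mul_card_sub_le (ht j.le_succ))
    have := abs_le.mp ih
    rw [abs_le]
    push_cast
    constructor <;> linarith

lemma abs_two_mul_card_sub_le_of_mem_block (ht : Monotone t)
    (hS : ∀ j, ParityOn S (t j) (t (j + 1))) {j N : ℕ} (hjN : t j ≤ N) (hNj : N ≤ t (j + 1)) :
    |2 * (#{k ∈ range N | k ∈ S} : ℤ) - N| ≤ t 0 + j + 1 := by
  rw [← card_filter_range_add_card_filter_Ico _ hjN]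
  have hblock := abs_le.mp (((hS j).mono le_rfl hNj).abs_two_mul_card_sub_le hjN)
  have := abs_le.mp (abs_two_mul_card_sub_le_of_parityOn_blocks ht hS j)
  rw [abs_le]
  push_cast
  constructor <;> linarith

lemma abs_partialDensity_sub_half_le (ht : Monotone t)
    (hS : ∀ j, ParityOn S (t j) (t (j + 1))) {j N : ℕ} (hjN : t j ≤ N) (hNj : N ≤ t (j + 1))
    (hj : 0 < t j) : |partialDensity S N - 1 / 2| ≤ (t 0 + j + 1) / (2 * t j) := by
  have hN : (0 : ℝ) < N := by exact_mod_cast hj.trans_le hjN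
  have hcount : |2 * (#{k ∈ range N | k ∈ S} : ℝ) - N| ≤ t 0 + j + 1 := by
    exact_mod_cast abs_two_mul_card_sub_le_of_mem_block ht hS hjN hNj
  have hsplit : partialDensity S N - 1 / 2 = (2 * #{k ∈ range N | k ∈ S} - N) / (2 * N) := by
    unfold partialDensity
    field_simp
  rw [hsplit, abs_div, abs_of_pos (mul_pos two_pos hN)]
  calc _ ≤ (t 0 + j + 1 : ℝ) / (2 * N) := by gcongr
    _ ≤ _ := by gcongr

lemma exists_block_index (ht : Monotone t) (ht_top : Tendsto t atTop atTop) :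
    ∃ J : ℕ → ℕ, Tendsto J atTop atTop ∧ ∀ N, t 0 ≤ N → t (J N) ≤ N ∧ N < t (J N + 1) := by
  have hex : ∀ N, ∃ j, N < t (j + 1) := fun N =>
    ((tendsto_add_atTop_iff_nat 1).mpr ht_top).eventually_gt_atTop N |>.exists
  refine ⟨fun N => Nat.find (hex N), ?_, fun N hN => ⟨?_, Nat.find_spec (hex N)⟩⟩
  · refine tendsto_atTop.mpr fun m => eventually_atTop.mpr ⟨t m, fun N hN => ?_⟩
    by_contra! hlt
    exact (Nat.find_spec (hex N)).not_ge ((ht hlt).trans hN)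
  · change t (Nat.find (hex N)) ≤ N
    rcases h : Nat.find (hex N) with _ | i
    · exact hN
    · exact not_lt.mp (Nat.find_min (hex N) (by omega))

theorem hasDensity_half_of_parityOn_blocks (ht : Monotone t) (ht_top : Tendsto t atTop atTop)
    (ht_sparse : Tendsto (fun j : ℕ => (j : ℝ) / t j) atTop (𝓝 0))
    (hS : ∀ j, ParityOn S (t j) (t (j + 1))) : HasDensity S (1 / 2) := by
  obtain ⟨J, hJ, hJN⟩ := exists_block_index ht ht_top
  have ht_top' : Tendsto (fun j => (t j : ℝ)) atTop atTop :=
    tendsto_natCast_atTop_atTop.comp ht_top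
  have hbound : Tendsto (fun j : ℕ => (t 0 + j + 1 : ℝ) / (2 * t j)) atTop (𝓝 0) := by
    have h := ((tendsto_const_nhds (x := (t 0 + 1 : ℝ))).div_atTop ht_top').add ht_sparse
    rw [zero_add] at h
    convert h.div_const 2 using 1
    · funext j
      ring
    · simp
  refine tendsto_iff_norm_sub_tendsto_zero.mpr
    (squeeze_zero' (.of_forall fun _ => norm_nonneg _) ?_ (hbound.comp hJ))
  filter_upwards [eventually_ge_atTop (t 0), hJ.eventually (ht_top.eventually_gt_atTop 0)]
    with N hN hpos
  exact abs_partialDensity_sub_half_le ht hS (hJN N hN).1 (hJN N hN).2.le hpos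

end Blocks

lemma mem_calI_iff_of_mem_Ico {A : Set ℕ} {j k : ℕ} (hk : k ∈ Ico j.factorial (j + 1).factorial) :
    k ∈ calI A ↔ j ∈ A := by
  rw [mem_Ico] at hk
  simp only [calI, Set.mem_iUnion, Set.mem_Ico, exists_prop]
  refine ⟨fun ⟨n, hn, hnk, hkn⟩ => ?_, fun hj => ⟨j, hj, hk⟩⟩
  obtain rfl : n = j := by
    rcases lt_trichotomy n j with h | h | h
    · linarith [Nat.factorial_le (Nat.succ_le_of_lt h)]
    · exact h
    · linarith [Nat.factorial_le (Nat.succ_le_of_lt h)]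
  exact hn

lemma parityOn_calI_agree_even (A : Set ℕ) (j : ℕ) :
    ParityOn {n | n ∈ calI A ↔ Even n} j.factorial (j + 1).factorial := by
  by_cases hj : j ∈ A
  · exact .inl fun k hk => by simp [mem_calI_iff_of_mem_Ico hk, hj]
  · exact .inr fun k hk => by simp [mem_calI_iff_of_mem_Ico hk, hj]

lemma tendsto_natCast_div_factorial_atTop :
    Tendsto (fun j : ℕ => (j : ℝ) / j.factorial) atTop (𝓝 0) := by
  refine squeeze_zero (fun j => by positivity) (fun j => ?_)
    (FloorSemiring.tendsto_pow_div_factorial_atTop (2 : ℝ))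
  gcongr
  exact_mod_cast (Nat.lt_two_pow_self).le

theorem calI_agree_even_density (A : Set ℕ) :
    HasDensity {n | n ∈ calI A ↔ Even n} (1 / 2) :=
  hasDensity_half_of_parityOn_blocks Nat.monotone_factorial factorial_tendsto_atTop
    tendsto_natCast_div_factorial_atTop (parityOn_calI_agree_even A)
end

section
/- Every weakly 1-generic set A satisfies γ(A) = 0; that is, for every computable function f : ℕ → {0,1} and every weakly 1-generic A, the set {k : f(k) = A(k)} has lower density 0. -/
open Filter Topology
open scoped symmDiff Classical

/-- A (viewed as an element of 2^ω) extends the finite binary string σ. -/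
def ExtendsString (A : Set ℕ) (σ : List Bool) : Prop :=
  ∀ i : ℕ, ∀ h : i < σ.length, (σ.get ⟨i, h⟩ = true ↔ i ∈ A)

/-- A set of finite binary strings is dense: every string has an extension in S. -/
def DenseStrings (S : Set (List Bool)) : Prop := ∀ τ : List Bool, ∃ σ ∈ S, τ <+: σ

/-- A is weakly 1-generic: A meets every dense c.e. set of binary strings. -/
def Weakly1Generic (A : Set ℕ) : Prop :=
  ∀ S : Set (List Bool), REPred (· ∈ S) → DenseStrings S → ∃ σ ∈ S, ExtendsString A σ


/-! ### Auxiliary machinery -/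

/-- counting agreements of `σ` with `f` below `m`. -/
def cnt (f : ℕ → Bool) (σ : List Bool) : ℕ → ℕ
  | 0 => 0
  | m+1 => cnt f σ m + (bif σ.getD m false == f m then 1 else 0)

lemma cnt_eq_card (f : ℕ → Bool) (σ : List Bool) (m : ℕ) :
    cnt f σ m = ((Finset.range m).filter (fun k => σ.getD k false = f k)).card := by
  induction m with
  | zero => simp [cnt]
  | succ m ih =>
      rw [Finset.range_add_one, Finset.filter_insert]
      by_cases h : σ.getD m false = f m
      · rw [if_pos h, Finset.card_insert_of_notMem (by simp)]
        simp [cnt, h, ih, ← List.getD_eq_getElem?_getD]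
      · rw [if_neg h]
        rw [cnt, ih]
        have : (σ.getD m false == f m) = false := beq_eq_false_iff_ne.mpr h
        rw [List.getD_eq_getElem?_getD] at this
        simp [this]

lemma cnt_computable {f : ℕ → Bool} (hf : Computable f) :
    Computable (fun σ : List Bool => cnt f σ σ.length) := by
  have hgetD : Computable₂ (fun (σ : List Bool) (k : ℕ) => σ.getD k false) :=
    (Primrec.list_getD false).to_comp
  have hb : Computable (fun q : List Bool × ℕ × ℕ => (q.1.getD q.2.1 false == f q.2.1)) :=
    Primrec.beq.to_comp.comp (hgetD.comp Computable.fst (Computable.fst.comp Computable.snd))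
      (hf.comp (Computable.fst.comp Computable.snd))
  have hstep : Computable₂ (fun (σ : List Bool) (p : ℕ × ℕ) =>
      p.2 + (bif σ.getD p.1 false == f p.1 then 1 else 0)) :=
    Primrec.nat_add.to_comp.comp (Computable.snd.comp Computable.snd)
      (Computable.cond hb (Computable.const 1) (Computable.const 0))
  exact (Computable.nat_rec Computable.list_length (Computable.const 0) hstep).of_eq
    (fun σ => by induction σ.length with
      | zero => simp [cnt]
      | succ m ih => rw [cnt, ← ih])

/-- The dense computable sets of strings used against a computable `f`. -/
def WGSet (f : ℕ → Bool) (n j : ℕ) : Set (List Bool) :=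
  {σ | j ≤ σ.length ∧ (n+1) * cnt f σ σ.length < σ.length}

lemma WGSet_re {f : ℕ → Bool} (hf : Computable f) (n j : ℕ) :
    REPred (· ∈ WGSet f n j) := by
  refine ComputablePred.to_re (ComputablePred.computable_iff.2
    ⟨fun σ => decide (j ≤ σ.length) && decide ((n+1) * cnt f σ σ.length < σ.length), ?_, ?_⟩)
  · have h1 : Computable (fun σ : List Bool => decide (j ≤ σ.length)) :=
      (Primrec.nat_le.comp (Primrec.const j) Primrec.list_length).decide.to_comp
    have h2 : Computable (fun σ : List Bool =>
        decide ((n+1) * cnt f σ σ.length < σ.length)) :=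
      Primrec.nat_lt.decide.to_comp.comp
        (Primrec.nat_mul.to_comp.comp (Computable.const (n+1)) (cnt_computable hf))
        Computable.list_length
    exact (Computable.cond h1 h2 (Computable.const false)).of_eq fun σ => by
      cases h : decide (j ≤ σ.length) <;> simp [h]
  · funext σ
    simp [WGSet]

lemma WGSet_dense (f : ℕ → Bool) (n j : ℕ) : DenseStrings (WGSet f n j) := by
  intro τ
  set L : ℕ := max j ((n+1) * τ.length + 1) with hL
  have hτL : τ.length ≤ L := by
    have : τ.length ≤ (n+1) * τ.length := Nat.le_mul_of_pos_left _ (Nat.succ_pos n)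
    omega
  have hlen0 : (τ ++ (List.range (L - τ.length)).map
      (fun i => !f (τ.length + i))).length = L := by
    simp; omega
  have hget : ∀ k, τ.length ≤ k → k < L →
      (τ ++ (List.range (L - τ.length)).map (fun i => !f (τ.length + i))).getD k false
        = !f k := by
    intro k hk1 hk2
    have hkσ : k < (τ ++ (List.range (L - τ.length)).map
        (fun i => !f (τ.length + i))).length := by rw [hlen0]; exact hk2
    rw [List.getD_eq_getElem _ _ hkσ]
    rw [List.getElem_append_right (by simpa using hk1)]
    simp only [List.getElem_map, List.getElem_range]
    have hkk : τ.length + (k - τ.length) = k := by omega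
    rw [hkk]
  set σ : List Bool := τ ++ (List.range (L - τ.length)).map (fun i => !f (τ.length + i))
    with hσ
  have hlen : σ.length = L := hlen0
  have hcnt : cnt f σ σ.length ≤ τ.length := by
    rw [cnt_eq_card]
    have hsub : (Finset.range σ.length).filter (fun k => σ.getD k false = f k) ⊆
        Finset.range τ.length := by
      intro k hk
      simp only [Finset.mem_filter, Finset.mem_range] at hk ⊢
      by_contra hc
      push_neg at hc
      have := hget k hc (hlen ▸ hk.1)
      rw [this] at hk
      exact (Bool.not_ne_self (f k)) hk.2
    calc _ ≤ (Finset.range τ.length).card := Finset.card_le_card hsub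
      _ = τ.length := Finset.card_range _
  refine ⟨σ, ⟨?_, ?_⟩, ⟨_, rfl⟩⟩
  · rw [hlen]; exact le_max_left _ _
  · have h2 : (n+1) * cnt f σ σ.length ≤ (n+1) * τ.length :=
      Nat.mul_le_mul_left _ hcnt
    omega

lemma partialDensity_nonneg (S : Set ℕ) (m : ℕ) : 0 ≤ partialDensity S m :=
  div_nonneg (by positivity) (by positivity)

lemma partialDensity_le_one (S : Set ℕ) (m : ℕ) : partialDensity S m ≤ 1 := by
  unfold partialDensity
  rcases Nat.eq_zero_or_pos m with rfl | hm
  · simp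
  · rw [div_le_one (by exact_mod_cast hm)]
    exact_mod_cast (Finset.card_filter_le _ _).trans (Finset.card_range m).le

lemma lowerDensity_nonneg (S : Set ℕ) : 0 ≤ lowerDensity S := by
  refine Filter.le_liminf_of_le ?_ (Filter.Eventually.of_forall fun m => partialDensity_nonneg S m)
  exact Filter.IsBoundedUnder.isCoboundedUnder_ge
    (Filter.isBoundedUnder_of ⟨1, fun m => partialDensity_le_one S m⟩)

lemma partialDensity_eq_cnt (S : Set ℕ) (f : ℕ → Bool) (σ : List Bool)
    (h : ∀ k, k < σ.length → (k ∈ S ↔ σ.getD k false = f k)) :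
    partialDensity S σ.length = (cnt f σ σ.length : ℝ) / (σ.length : ℝ) := by
  unfold partialDensity
  rw [cnt_eq_card]
  congr 2
  apply congrArg
  apply Finset.filter_congr
  intro k hk
  rw [Finset.mem_range] at hk
  simp [h k hk]

lemma key_lemma (A : Set ℕ) (hA : Weakly1Generic A) (f : ℕ → Bool) (hf : Computable f) :
    lowerDensity {k | f k = true ↔ k ∈ A} = 0 := by
  set S : Set ℕ := {k | f k = true ↔ k ∈ A} with hS
  have hbdd : Filter.IsBoundedUnder (· ≥ ·) Filter.atTop (partialDensity S) :=
    Filter.isBoundedUnder_of ⟨0, fun m => partialDensity_nonneg S m⟩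
  have hub : ∀ n : ℕ, lowerDensity S ≤ 1 / (n + 1 : ℝ) := by
    intro n
    refine Filter.liminf_le_of_frequently_le ?_ hbdd
    rw [Filter.frequently_atTop]
    intro j
    obtain ⟨σ, ⟨hj, hc⟩, hext⟩ := hA (WGSet f n j) (WGSet_re hf n j) (WGSet_dense f n j)
    refine ⟨σ.length, hj, ?_⟩
    have hmpos : 0 < σ.length := lt_of_le_of_lt (Nat.zero_le _) hc
    have hcard : partialDensity S σ.length = (cnt f σ σ.length : ℝ) / (σ.length : ℝ) := by
      apply partialDensity_eq_cnt
      intro k hk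
      have h1 : σ.getD k false = σ[k] := List.getD_eq_getElem _ _ hk
      have h2 : (σ[k] = true) ↔ k ∈ A := hext k hk
      rw [hS]
      simp only [Set.mem_setOf_eq, h1, ← h2]
      cases hb : σ[k] <;> cases hcf : f k <;> simp
    rw [hcard, div_le_div_iff₀ (by exact_mod_cast hmpos) (by positivity)]
    have : ((n : ℝ) + 1) * (cnt f σ σ.length : ℝ) ≤ (σ.length : ℝ) := by
      exact_mod_cast hc.le
    linarith
  have hle : lowerDensity S ≤ 0 :=
    ge_of_tendsto' tendsto_one_div_add_atTop_nhds_zero_nat hub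
  exact le_antisymm hle (lowerDensity_nonneg S)

theorem weakly1Generic_gamma_zero (A : Set ℕ) (hA : Weakly1Generic A) :
    gammaBound A = 0 ∧
    ∀ f : ℕ → Bool, Computable f → lowerDensity {k | f k = true ↔ k ∈ A} = 0 := by
  have key : ∀ f : ℕ → Bool, Computable f → lowerDensity {k | f k = true ↔ k ∈ A} = 0 :=
    fun f hf => key_lemma A hA f hf
  constructor
  · have hset : {r | CoarselyComputableAt A r} = Set.Iic (0 : ℝ) := by
      ext r
      simp only [Set.mem_setOf_eq, Set.mem_Iic]
      constructor
      · rintro ⟨C, hC, hr⟩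
        obtain ⟨g, hg, hgC⟩ := ComputablePred.computable_iff.1 hC
        have heq : {n | n ∈ A ↔ n ∈ C} = {k | g k = true ↔ k ∈ A} := by
          ext n
          have h3 : (n ∈ C) = ((g n : Prop)) := congrFun hgC n
          simp only [Set.mem_setOf_eq, h3]
          exact Iff.comm
        rw [heq, key g hg] at hr
        exact hr
      · intro hr
        refine ⟨∅, ?_, ?_⟩
        · exact ComputablePred.computable_iff.2
            ⟨fun _ => false, Computable.const false, funext fun n => by simp⟩
        · exact hr.trans (lowerDensity_nonneg _)
    rw [gammaBound, hset, csSup_Iic]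
  · exact key
end

section
/- Suppose A = A₁ ∪ Z where A₁ has density r and γ(Z) = 0. Then γ(A) = r and A is coarsely computable at density r (witnessed by the computable set ℕ). -/
open Filter Topology
open scoped symmDiff Classical

lemma pd_nonneg (A : Set ℕ) (n : ℕ) : 0 ≤ partialDensity A n := by
  unfold partialDensity; positivity

lemma pd_le_one (A : Set ℕ) (n : ℕ) : partialDensity A n ≤ 1 := by
  unfold partialDensity
  rcases Nat.eq_zero_or_pos n with h | h
  · simp [h]
  · rw [div_le_one (by exact_mod_cast h)]
    exact_mod_cast (Finset.card_filter_le _ _).trans (Finset.card_range n).le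

lemma pd_bddBelow (A : Set ℕ) : IsBoundedUnder (· ≥ ·) atTop (partialDensity A) :=
  ⟨0, eventually_map.mpr (Eventually.of_forall (pd_nonneg A))⟩

lemma pd_bddAbove (A : Set ℕ) : IsBoundedUnder (· ≤ ·) atTop (partialDensity A) :=
  ⟨1, eventually_map.mpr (Eventually.of_forall (pd_le_one A))⟩

lemma ld_le_one (A : Set ℕ) : lowerDensity A ≤ 1 :=
  liminf_le_of_frequently_le (Frequently.of_forall (pd_le_one A)) (pd_bddBelow A)

lemma pd_mono {A B : Set ℕ} (h : A ⊆ B) (n : ℕ) : partialDensity A n ≤ partialDensity B n := by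
  unfold partialDensity
  gcongr

lemma pd_subadd {A B : Set ℕ} (n : ℕ) :
    partialDensity (A ∪ B) n ≤ partialDensity A n + partialDensity B n := by
  unfold partialDensity
  rw [← add_div]
  gcongr
  have hcard : (@Finset.filter ℕ (fun k => k ∈ A ∪ B) (fun a => Classical.propDecidable (a ∈ A ∪ B)) (Finset.range n)).card ≤
      ((Finset.range n).filter (fun k => k ∈ A)).card + ((Finset.range n).filter (fun k => k ∈ B)).card := by
    refine le_trans (Finset.card_le_card ?_) (Finset.card_union_le _ _)
    intro x hx
    simp only [Finset.mem_filter, Finset.mem_union, Set.mem_union] at *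
    tauto
  exact_mod_cast hcard

lemma ld_mono {A B : Set ℕ} (h : A ⊆ B) : lowerDensity A ≤ lowerDensity B :=
  liminf_le_liminf (Eventually.of_forall (pd_mono h)) (pd_bddBelow A)
    (pd_bddAbove B).isCoboundedUnder_ge

lemma isComputable_univ : IsComputableSet (Set.univ : Set ℕ) := by
  rw [IsComputableSet, ComputablePred.computable_iff]
  exact ⟨fun _ => true, Computable.const true, by funext n; simp⟩

theorem gamma_union_of_density (A₁ Z : Set ℕ) (r : ℝ) (h₁ : HasDensity A₁ r)
    (hZ : gammaBound Z = 0) :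
    gammaBound (A₁ ∪ Z) = r ∧ CoarselyComputableAt (A₁ ∪ Z) r := by
  have hA1ld : lowerDensity A₁ = r := h₁.liminf_eq
  have hcc : CoarselyComputableAt (A₁ ∪ Z) r := by
    refine ⟨Set.univ, isComputable_univ, ?_⟩
    have : {n : ℕ | n ∈ A₁ ∪ Z ↔ n ∈ Set.univ} = A₁ ∪ Z := by
      ext n; simp
    rw [this]
    calc r = lowerDensity A₁ := hA1ld.symm
      _ ≤ lowerDensity (A₁ ∪ Z) := ld_mono Set.subset_union_left
  refine ⟨?_, hcc⟩
  -- upper bound: every witness density is ≤ r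
  have hbddZ : BddAbove {s | CoarselyComputableAt Z s} := by
    refine ⟨1, fun s hs => ?_⟩
    obtain ⟨C, _, hle⟩ := hs
    exact hle.trans (ld_le_one _)
  have hub : ∀ s ∈ {s | CoarselyComputableAt (A₁ ∪ Z) s}, s ≤ r := by
    rintro s ⟨C, hC, hle⟩
    -- g = agreement of Z with C ; its lower density is ≤ 0
    have hgZ : lowerDensity {n | n ∈ Z ↔ n ∈ C} ≤ 0 := by
      have : lowerDensity {n | n ∈ Z ↔ n ∈ C} ∈ {s | CoarselyComputableAt Z s} :=
        ⟨C, hC, le_refl _⟩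
      calc lowerDensity {n | n ∈ Z ↔ n ∈ C} ≤ gammaBound Z := le_csSup hbddZ this
        _ = 0 := hZ
    -- pointwise: agreement set ⊆ A₁ ∪ {Z ↔ C}
    have hsub : {n : ℕ | n ∈ A₁ ∪ Z ↔ n ∈ C} ⊆ A₁ ∪ {n | n ∈ Z ↔ n ∈ C} := by
      intro n hn
      by_cases h : n ∈ A₁
      · exact Or.inl h
      · refine Or.inr ?_
        simp only [Set.mem_setOf_eq, Set.mem_union] at hn ⊢
        tauto
    refine le_of_forall_pos_le_add fun ε hε => ?_
    have hfreq : ∃ᶠ n in atTop, partialDensity {n | n ∈ Z ↔ n ∈ C} n < ε / 2 :=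
      frequently_lt_of_liminf_lt (pd_bddAbove _).isCoboundedUnder_ge
        (lt_of_le_of_lt hgZ (by positivity))
    have hev : ∀ᶠ n in atTop, partialDensity A₁ n < r + ε / 2 := by
      have := h₁ (Iio_mem_nhds (show r < r + ε / 2 by linarith))
      simpa [Set.mem_Iio] using this
    have hfreq2 : ∃ᶠ n in atTop, partialDensity {n : ℕ | n ∈ A₁ ∪ Z ↔ n ∈ C} n ≤ r + ε := by
      refine (hfreq.and_eventually hev).mono ?_
      rintro n ⟨h1, h2⟩
      calc partialDensity {n : ℕ | n ∈ A₁ ∪ Z ↔ n ∈ C} n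
          ≤ partialDensity (A₁ ∪ {n | n ∈ Z ↔ n ∈ C}) n := pd_mono hsub n
        _ ≤ partialDensity A₁ n + partialDensity {n | n ∈ Z ↔ n ∈ C} n := pd_subadd n
        _ ≤ r + ε := by linarith
    exact hle.trans (liminf_le_of_frequently_le hfreq2 (pd_bddBelow _))
  have hmem : r ∈ {s | CoarselyComputableAt (A₁ ∪ Z) s} := hcc
  exact IsGreatest.csSup_eq ⟨hmem, hub⟩
end

section
/- If γ(A) = 1 constructively, then A is coarsely computable. That is, if there is a uniformly computable sequence of computable sets C₀, C₁, ... with ρ̄(A △ C_n) < 2^{-n} for all n, then there is a computable set C with ρ(A △ C) = 0. -/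
open Filter Topology
open scoped symmDiff Classical

/-!
Cut `ℕ` into the dyadic blocks `I_k = [2^k - 1, 2^(k+1) - 1)`. Since `ρ̄(A ∆ C_n) < 2^(-n)`, the
local density of `A ∆ C_n` on `I_k` is eventually below `2^(1-n)`; hence for `m < n` the local
density of `C_m ∆ C_n` is eventually below `2^(2-m)`, i.e. `C_m` eventually trusts `C_n`. Trust
is decidable, so `C` can copy on `I_k` the largest `N ≤ k` trusted by every `C_m` with `m < N`.
Every fixed `n` is eventually trusted by all smaller indices, so eventually `N ≥ n`, and then,
since `C_n` trusts `C_N`, the local density of `A ∆ C` on `I_k` is below `2^(1-n) + 2^(2-n)`.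
Local densities tending to `0` give density `0` because the blocks grow geometrically, so the
blocks before any fixed one are negligible.
-/

theorem Nat.count_congr {p q : ℕ → Prop} [DecidablePred p] [DecidablePred q] {n : ℕ}
    (h : ∀ k < n, p k ↔ q k) : Nat.count p n = Nat.count q n :=
  le_antisymm (Nat.count_mono_left fun k hk => (h k hk).1)
    (Nat.count_mono_left fun k hk => (h k hk).2)

theorem Nat.count_le_count_add_count {p q r : ℕ → Prop} [DecidablePred p] [DecidablePred q]
    [DecidablePred r] (h : ∀ k, r k → p k ∨ q k) (n : ℕ) :
    Nat.count r n ≤ Nat.count p n + Nat.count q n := by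
  induction n with
  | zero => simp
  | succ n ih =>
    simp only [Nat.count_succ]
    have := h n
    split_ifs <;> grind

theorem Nat.log_two_pow_add {k i : ℕ} (hi : i < 2 ^ k) : Nat.log 2 (2 ^ k + i) = k :=
  Nat.log_eq_of_pow_le_of_lt_pow (by omega) (by rw [pow_succ]; omega)

theorem partialDensity_eq_count (X : Set ℕ) (n : ℕ) :
    partialDensity X n = Nat.count (· ∈ X) n / n := by
  rw [partialDensity, Nat.count_eq_card_filter_range]

theorem partialDensity_nonneg_s12 (X : Set ℕ) (n : ℕ) : 0 ≤ partialDensity X n := by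
  rw [partialDensity_eq_count]; positivity

theorem partialDensity_le_one_s12 (X : Set ℕ) (n : ℕ) : partialDensity X n ≤ 1 := by
  rw [partialDensity_eq_count]
  exact div_le_one_of_le₀ (by exact_mod_cast Nat.count_le _) n.cast_nonneg

/-- The number of elements of `X` in the block `I_k = [2^k - 1, 2^(k+1) - 1)`, whose `2^k`
elements are the `x` with `Nat.log 2 (x + 1) = k`. -/
noncomputable def blockCount (X : Set ℕ) (k : ℕ) : ℕ :=
  Nat.count (fun i => 2 ^ k - 1 + i ∈ X) (2 ^ k)

noncomputable def localDensity (X : Set ℕ) (k : ℕ) : ℝ := blockCount X k / 2 ^ k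

theorem count_add_blockCount (X : Set ℕ) (k : ℕ) :
    Nat.count (· ∈ X) (2 ^ k - 1) + blockCount X k = Nat.count (· ∈ X) (2 ^ (k + 1) - 1) := by
  rw [blockCount, ← Nat.count_add]
  congr 1
  have := Nat.one_le_two_pow (n := k)
  rw [pow_succ]
  omega

theorem blockCount_congr {X Y : Set ℕ} {k : ℕ}
    (h : ∀ x, Nat.log 2 (x + 1) = k → (x ∈ X ↔ x ∈ Y)) : blockCount X k = blockCount Y k :=
  Nat.count_congr fun i hi => h _ <| by
    rw [add_right_comm, Nat.sub_add_cancel Nat.one_le_two_pow, Nat.log_two_pow_add hi]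

theorem blockCount_symmDiff_le (X Y Z : Set ℕ) (k : ℕ) :
    blockCount (X ∆ Z) k ≤ blockCount (X ∆ Y) k + blockCount (Y ∆ Z) k :=
  Nat.count_le_count_add_count (fun _ hx => symmDiff_triangle X Y Z hx) _

theorem localDensity_nonneg (X : Set ℕ) (k : ℕ) : 0 ≤ localDensity X k := by
  unfold localDensity; positivity

theorem localDensity_symmDiff_le (X Y Z : Set ℕ) (k : ℕ) :
    localDensity (X ∆ Z) k ≤ localDensity (X ∆ Y) k + localDensity (Y ∆ Z) k := by
  rw [localDensity, localDensity, localDensity, ← add_div]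
  gcongr
  exact_mod_cast blockCount_symmDiff_le X Y Z k

theorem eventually_localDensity_lt {X : Set ℕ} {r : ℝ} (h : upperDensity X < r) :
    ∀ᶠ k in atTop, localDensity X k < 2 * r := by
  have hbdd : IsBoundedUnder (· ≤ ·) atTop (partialDensity X) :=
    isBoundedUnder_of ⟨1, partialDensity_le_one_s12 X⟩
  have hblock : Tendsto (fun k => 2 ^ (k + 1) - 1) atTop atTop :=
    tendsto_atTop_mono (fun k => show k ≤ _ by have := Nat.lt_two_pow_self (n := k + 1); omega)
      tendsto_id
  filter_upwards [hblock.eventually (eventually_lt_of_limsup_lt h hbdd)] with k hk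
  have hlen : ((2 ^ (k + 1) - 1 : ℕ) : ℝ) + 1 = 2 * 2 ^ k := by
    rw [Nat.cast_sub Nat.one_le_two_pow]; push_cast; ring
  have hcount : blockCount X k ≤ Nat.count (· ∈ X) (2 ^ (k + 1) - 1) :=
    count_add_blockCount X k ▸ Nat.le_add_left _ _
  have hpos : (0 : ℝ) < (2 ^ (k + 1) - 1 : ℕ) := by
    exact_mod_cast Nat.sub_pos_of_lt (Nat.one_lt_two_pow k.succ_ne_zero)
  rw [partialDensity_eq_count, div_lt_iff₀ hpos] at hk
  rw [localDensity, div_lt_iff₀ (by positivity)]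
  nlinarith [(by exact_mod_cast hcount : (blockCount X k : ℝ) ≤ Nat.count (· ∈ X) _)]

theorem count_le_of_localDensity_lt {X : Set ℕ} {ε : ℝ} {K : ℕ}
    (hK : ∀ k ≥ K, localDensity X k < ε) (k : ℕ) (hk : K ≤ k) :
    (Nat.count (· ∈ X) (2 ^ k - 1) : ℝ) ≤ 2 ^ K + ε * 2 ^ k := by
  induction k, hk using Nat.le_induction with
  | base =>
    have hε : 0 < ε := (localDensity_nonneg X K).trans_lt (hK K le_rfl)
    have : (Nat.count (· ∈ X) (2 ^ K - 1) : ℝ) ≤ 2 ^ K := by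
      exact_mod_cast (Nat.count_le _).trans (Nat.sub_le _ _)
    linarith [show (0 : ℝ) < ε * 2 ^ K by positivity]
  | succ k hk ih =>
    have hblock := hK k hk
    rw [localDensity, div_lt_iff₀ (by positivity)] at hblock
    rw [← count_add_blockCount, pow_succ]
    push_cast
    linarith

theorem hasDensity_zero_of_tendsto_localDensity {X : Set ℕ}
    (h : Tendsto (localDensity X) atTop (𝓝 0)) : HasDensity X 0 := by
  refine tendsto_order.2 ⟨fun a ha => Eventually.of_forall fun n =>
    ha.trans_le (partialDensity_nonneg_s12 X n), fun ε hε => ?_⟩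
  obtain ⟨K, hK⟩ := eventually_atTop.1 (h.eventually (gt_mem_nhds (by positivity : 0 < ε / 4)))
  filter_upwards [eventually_ge_atTop (2 ^ K),
    (tendsto_const_div_atTop_nhds_zero_nat (2 ^ K : ℝ)).eventually (gt_mem_nhds (half_pos hε))]
    with n hn hsmall
  have hn0 : n ≠ 0 := (Nat.two_pow_pos K).trans_le hn |>.ne'
  set k := Nat.log 2 n + 1
  have hKk : K ≤ k := Nat.le_succ_of_le (Nat.le_log_of_pow_le one_lt_two hn)
  have hnk : n ≤ 2 ^ k - 1 := Nat.le_sub_one_of_lt (Nat.lt_pow_succ_log_self one_lt_two n)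
  have hkn : (2 ^ k : ℝ) ≤ 2 * n := by
    rw [pow_succ, mul_comm]; exact_mod_cast Nat.mul_le_mul_left 2 (Nat.pow_log_le_self 2 hn0)
  have hcount : (Nat.count (· ∈ X) n : ℝ) ≤ 2 ^ K + ε / 4 * (2 * n) :=
    calc (Nat.count (· ∈ X) n : ℝ) ≤ Nat.count (· ∈ X) (2 ^ k - 1) := by
          exact_mod_cast Nat.count_monotone _ hnk
      _ ≤ 2 ^ K + ε / 4 * 2 ^ k := count_le_of_localDensity_lt hK k hKk
      _ ≤ 2 ^ K + ε / 4 * (2 * n) := by gcongr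
  have hnpos : (0 : ℝ) < n := by exact_mod_cast Nat.pos_of_ne_zero hn0
  calc partialDensity X n = Nat.count (· ∈ X) n / n := partialDensity_eq_count X n
    _ ≤ (2 ^ K + ε / 4 * (2 * n)) / n := by gcongr
    _ = 2 ^ K / n + ε / 2 := by field_simp; ring
    _ < ε := by linarith

theorem Primrec.nat_pow : Primrec₂ ((· ^ ·) : ℕ → ℕ → ℕ) :=
  Primrec₂.unpaired'.1 Nat.Primrec.pow

theorem Nat.log_eq_findGreatest {b : ℕ} (hb : 1 < b) (n : ℕ) :
    Nat.log b n = Nat.findGreatest (fun j => b ^ j ≤ n) n := by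
  rcases Nat.eq_zero_or_pos n with rfl | hn
  · simp
  refine (Nat.findGreatest_eq_iff.2 ⟨Nat.log_le_self b n, fun _ => ?_, fun j hj _ hjn => ?_⟩).symm
  · exact Nat.pow_log_le_self b hn.ne'
  · exact hj.not_ge (Nat.le_log_of_pow_le hb hjn)

theorem Primrec.nat_log (b : ℕ) : Primrec (Nat.log b) := by
  rcases le_or_gt b 1 with hb | hb
  · exact (Primrec.const 0).of_eq fun n => (Nat.log_of_left_le_one hb n).symm
  · exact (Primrec.nat_findGreatest Primrec.id <| Primrec.nat_le.comp₂
      (Primrec.nat_pow.comp₂ (Primrec₂.const b) Primrec₂.right) Primrec₂.left).of_eq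
      fun n => (Nat.log_eq_findGreatest hb n).symm

section

variable {α : Type*} [Primcodable α] {f : α → ℕ} {p : α → ℕ → Bool}

theorem Computable.nat_count (hf : Computable f) (hp : Computable₂ p) :
    Computable fun a => Nat.count (fun n => p a n) (f a) := by
  refine (Computable.nat_rec hf (Computable.const 0)
    (Computable.cond (hp.comp Computable.fst (Computable.fst.comp Computable.snd))
      (Computable.succ.comp (Computable.snd.comp Computable.snd))
      (Computable.snd.comp Computable.snd)).to₂).of_eq fun a => ?_
  induction f a with
  | zero => rfl
  | succ n ih => cases h : p a n <;> simp [Nat.count_succ, ← ih, h]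

theorem Computable.list_range_all (hf : Computable f) (hp : Computable₂ p) :
    Computable fun a => (List.range (f a)).all (p a) := by
  refine (Computable.nat_rec hf (Computable.const true)
    ((Primrec.and.to_comp).comp (Computable.snd.comp Computable.snd)
      (hp.comp Computable.fst (Computable.fst.comp Computable.snd))).to₂).of_eq fun a => ?_
  induction f a with
  | zero => rfl
  | succ n ih => simp [List.range_succ, ← ih]

theorem Computable.nat_findGreatest (hf : Computable f) (hp : Computable₂ p) :
    Computable fun a => Nat.findGreatest (fun n => p a n) (f a) := by
  refine (Computable.nat_rec hf (Computable.const 0)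
    (Computable.cond
      (hp.comp Computable.fst (Computable.succ.comp (Computable.fst.comp Computable.snd)))
      (Computable.succ.comp (Computable.fst.comp Computable.snd))
      (Computable.snd.comp Computable.snd)).to₂).of_eq fun a => ?_
  induction f a with
  | zero => rfl
  | succ n ih => cases h : p a (n + 1) <;> simp [← ih, h]

end

namespace TrustConstruction

variable (C : ℕ → ℕ → Bool)

def approx (n : ℕ) : Set ℕ := {x | C n x = true}

def discrepancy (m n k : ℕ) : ℕ :=
  Nat.count (fun i => C m (2 ^ k - 1 + i) != C n (2 ^ k - 1 + i)) (2 ^ k)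

/-- The paper's `d_k(C_m ∆ C_n) < 2^(-m+2)`, cleared of denominators so that it is decidable. -/
def trusts (m n k : ℕ) : Bool := discrepancy C m n k * 2 ^ m < 2 ^ (k + 2)

def trustedIndex (k : ℕ) : ℕ :=
  Nat.findGreatest (fun N => (List.range N).all fun m => trusts C m N k) k

def coarseApprox : Set ℕ := {x | C (trustedIndex C (Nat.log 2 (x + 1))) x = true}

theorem discrepancy_eq_blockCount (m n k : ℕ) :
    discrepancy C m n k = blockCount (approx C m ∆ approx C n) k :=
  Nat.count_congr fun i _ => by
    simp only [approx, Set.mem_symmDiff, Set.mem_ofPred_eq]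
    cases C m (2 ^ k - 1 + i) <;> cases C n (2 ^ k - 1 + i) <;> decide

theorem trusts_iff (m n k : ℕ) :
    trusts C m n k = true ↔ localDensity (approx C m ∆ approx C n) k < 4 * (1 / 2) ^ m := by
  have h : (4 * (1 / 2) ^ m : ℝ) = 2 ^ (k + 2) / 2 ^ m / 2 ^ k := by
    rw [div_pow, one_pow]; field_simp; ring
  rw [trusts, decide_eq_true_iff, localDensity, h, ← discrepancy_eq_blockCount,
    div_lt_div_iff_of_pos_right (by positivity), lt_div_iff₀ (by positivity)]
  exact_mod_cast Iff.rfl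

theorem trusts_trustedIndex {k m : ℕ} (hm : m < trustedIndex C k) :
    trusts C m (trustedIndex C k) k = true := by
  have := Nat.findGreatest_spec (P := fun N => (List.range N).all (fun m => trusts C m N k))
    (Nat.zero_le k) (by simp)
  exact List.all_eq_true.1 this m (List.mem_range.2 hm)

theorem le_trustedIndex {n k : ℕ} (hnk : n ≤ k) (h : ∀ m < n, trusts C m n k = true) :
    n ≤ trustedIndex C k :=
  Nat.le_findGreatest hnk (by simpa only [List.all_eq_true, List.mem_range] using h)

theorem trusts_self (n k : ℕ) : trusts C n n k = true := by
  simp [trusts, discrepancy]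

theorem trusts_of_le_trustedIndex {n k : ℕ} (hn : n ≤ trustedIndex C k) :
    trusts C n (trustedIndex C k) k = true := by
  rcases hn.lt_or_eq with hlt | rfl
  · exact trusts_trustedIndex C hlt
  · exact trusts_self C _ k

theorem mem_coarseApprox_iff {x k : ℕ} (hx : Nat.log 2 (x + 1) = k) :
    x ∈ coarseApprox C ↔ x ∈ approx C (trustedIndex C k) := by
  subst hx; exact Iff.rfl

theorem localDensity_symmDiff_coarseApprox (A : Set ℕ) (k : ℕ) :
    localDensity (A ∆ coarseApprox C) k = localDensity (A ∆ approx C (trustedIndex C k)) k := by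
  unfold localDensity
  congr 2
  exact blockCount_congr fun x hx => by simp only [Set.mem_symmDiff, mem_coarseApprox_iff C hx]

theorem computable_trusts (hC : Computable₂ C) :
    Computable fun p : ℕ × ℕ × ℕ => trusts C p.1 p.2.1 p.2.2 := by
  have hpow : Primrec fun k => 2 ^ k := Primrec.nat_pow.comp (Primrec.const 2) Primrec.id
  have hidx : Primrec fun q : (ℕ × ℕ × ℕ) × ℕ => 2 ^ q.1.2.2 - 1 + q.2 :=
    Primrec.nat_add.comp (Primrec.nat_sub.comp (hpow.comp (Primrec.snd.comp
      (Primrec.snd.comp Primrec.fst))) (Primrec.const 1)) Primrec.snd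
  have hdisc : Computable fun p : ℕ × ℕ × ℕ => discrepancy C p.1 p.2.1 p.2.2 :=
    Computable.nat_count (hpow.comp (Primrec.snd.comp Primrec.snd)).to_comp
      ((Primrec.dom_bool₂ bne).to_comp.comp
        (hC.comp (Computable.fst.comp Computable.fst) hidx.to_comp)
        (hC.comp (Computable.fst.comp (Computable.snd.comp Computable.fst)) hidx.to_comp)).to₂
  exact (Primrec.nat_lt.decide.to_comp).comp
    (Primrec.nat_mul.to_comp.comp hdisc (hpow.comp Primrec.fst).to_comp)
    (hpow.comp (Primrec.nat_add.comp (Primrec.snd.comp Primrec.snd) (Primrec.const 2))).to_comp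

theorem isComputableSet_coarseApprox (hC : Computable₂ C) : IsComputableSet (coarseApprox C) := by
  have htrusts := computable_trusts C hC
  have hindex : Computable (trustedIndex C) :=
    Computable.nat_findGreatest Computable.id (Computable.list_range_all Computable.snd
      (htrusts.comp (Computable.pair Computable.snd (Computable.pair
        (Computable.snd.comp Computable.fst) (Computable.fst.comp Computable.fst)))).to₂).to₂
  exact ComputablePred.computable_iff.2 ⟨_, hC.comp
    (hindex.comp ((Primrec.nat_log 2).comp Primrec.succ).to_comp) Computable.id, rfl⟩

variable {C} {A : Set ℕ}

theorem eventually_trusts (happrox : ∀ n, upperDensity (A ∆ approx C n) < (1 / 2) ^ n)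
    {m n : ℕ} (hmn : m < n) : ∀ᶠ k in atTop, trusts C m n k = true := by
  filter_upwards [eventually_localDensity_lt (happrox m), eventually_localDensity_lt (happrox n)]
    with k hm hn
  have hmn' : ((1 : ℝ) / 2) ^ n ≤ (1 / 2) ^ m :=
    pow_le_pow_of_le_one (by norm_num) (by norm_num) hmn.le
  rw [trusts_iff]
  calc localDensity (approx C m ∆ approx C n) k
      ≤ localDensity (A ∆ approx C m) k + localDensity (A ∆ approx C n) k := by
        rw [symmDiff_comm A (approx C m)]; exact localDensity_symmDiff_le _ _ _ k
    _ < 4 * (1 / 2) ^ m := by linarith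

theorem eventually_le_trustedIndex (happrox : ∀ n, upperDensity (A ∆ approx C n) < (1 / 2) ^ n)
    (n : ℕ) : ∀ᶠ k in atTop, n ≤ trustedIndex C k := by
  have htrust : ∀ᶠ k in atTop, ∀ m ∈ Finset.range n, trusts C m n k = true :=
    (eventually_all_finset _).2 fun m hm => eventually_trusts happrox (Finset.mem_range.1 hm)
  filter_upwards [htrust, eventually_ge_atTop n] with k hk hnk
  exact le_trustedIndex C hnk fun m hm => hk m (Finset.mem_range.2 hm)

theorem eventually_localDensity_coarseApprox_lt
    (happrox : ∀ n, upperDensity (A ∆ approx C n) < (1 / 2) ^ n) (n : ℕ) :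
    ∀ᶠ k in atTop, localDensity (A ∆ coarseApprox C) k < 6 * (1 / 2) ^ n := by
  filter_upwards [eventually_localDensity_lt (happrox n), eventually_le_trustedIndex happrox n]
    with k hA hN
  have htrust := (trusts_iff C _ _ k).1 (trusts_of_le_trustedIndex C hN)
  rw [localDensity_symmDiff_coarseApprox]
  linarith [localDensity_symmDiff_le A (approx C n) (approx C (trustedIndex C k)) k]

theorem tendsto_localDensity_coarseApprox
    (happrox : ∀ n, upperDensity (A ∆ approx C n) < (1 / 2) ^ n) :
    Tendsto (localDensity (A ∆ coarseApprox C)) atTop (𝓝 0) := by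
  refine tendsto_order.2 ⟨fun a ha => Eventually.of_forall fun k =>
    ha.trans_le (localDensity_nonneg _ k), fun ε hε => ?_⟩
  obtain ⟨n, hn⟩ := exists_pow_lt_of_lt_one (by positivity : 0 < ε / 6) one_half_lt_one
  filter_upwards [eventually_localDensity_coarseApprox_lt happrox n] with k hk
  linarith

end TrustConstruction

theorem coarselyComputable_of_constructive_gamma_one (A : Set ℕ) (C : ℕ → ℕ → Bool)
    (hC : Computable₂ C)
    (happrox : ∀ n : ℕ, upperDensity (A ∆ {k | C n k = true}) < (1 / 2) ^ n) :
    ∃ C' : Set ℕ, IsComputableSet C' ∧ HasDensity (A ∆ C') 0 :=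
  ⟨TrustConstruction.coarseApprox C, TrustConstruction.isComputableSet_coarseApprox C hC,
    hasDensity_zero_of_tendsto_localDensity
      (TrustConstruction.tendsto_localDensity_coarseApprox happrox)⟩
end
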